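/- Let G be a graph of order n and let w be a support vertex of G whose set of leaf neighbors is L_G(w) = {v_1, …, v_t} with t ∈ {1, 2}. Let H be the induced subgraph of G on V(G) ∖ (L_G(w) ∪ {w}). Suppose every vertex of N_G(w) ∖ L_G(w) is a support vertex of G. Then 2n·|𝒟(G)| − 3·(Σ_{S∈𝒟(G)} |S|) = (2t+1)·[2(n−1−t)·|𝒟(H)| − 3·(Σ_{S∈𝒟(H)} |S|)]. -/

import Mathlib

/-!
Let `K = {w} ∪ L` with `L = L_G(w)` and `H = G - K`. A set `S` dominates `G` iff `S ∖ K`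
dominates `H` and `S ∩ K` contains `w` or all of `L`. The only delicate point is a neighbour `y`
of `w` outside `L` that is dominated by `w` alone: a leaf at `y` must then lie in `S`, and it
dominates `y` inside `H`. Hence `𝒟(G) ≅ 𝒟(H) × 𝒜` with `|𝒜| = 2^t + 1` and
`∑_{A ∈ 𝒜} |A| = t + 2^t + t·2^(t-1)`; for `t ∈ {1, 2}` these equal `2t + 1` and
`(2t + 1)(2t + 2)/3`, which is exactly the claimed identity.
-/

open scoped Classical

/-- The family of all dominating sets of `G`, as a `Finset` of `Finset`s. -/
noncomputable def domSets {V : Type*} [Fintype V] (G : SimpleGraph V) :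
    Finset (Finset V) :=
  Finset.univ.filter fun S => ∀ v ∉ S, ∃ u ∈ S, G.Adj u v

/-- The average order of a dominating set of `G`. -/
noncomputable def avd {V : Type*} [Fintype V] (G : SimpleGraph V) : ℚ :=
  (∑ S ∈ domSets G, (S.card : ℚ)) / ((domSets G).card : ℚ)

/-- A leaf is a vertex of degree one. -/
noncomputable def IsLeaf {V : Type*} [Fintype V] (G : SimpleGraph V) (v : V) : Prop :=
  G.degree v = 1

/-- The set of leaf neighbors of `w` in `G`. -/
noncomputable def leafNbrSet {V : Type*} [Fintype V] (G : SimpleGraph V) (w : V) : Set V :=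
  {v | G.Adj w v ∧ IsLeaf G v}

/-- A support vertex is a vertex adjacent to at least one leaf. -/
noncomputable def IsSupport {V : Type*} [Fintype V] (G : SimpleGraph V) (w : V) : Prop :=
  ∃ v, G.Adj w v ∧ IsLeaf G v

open Finset

section Split

variable {V : Type*} {s : Set V}

lemma card_map_subtype_union {D : Finset s} {A : Finset V} (hA : ∀ x ∈ A, x ∉ s) :
    #(D.map (Function.Embedding.subtype _) ∪ A) = #D + #A := by
  rw [card_union_of_disjoint, card_map]
  simp only [disjoint_left, mem_map, Function.Embedding.coe_subtype]
  rintro _ ⟨y, -, rfl⟩ hy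
  exact hA y hy y.2

variable [DecidablePred (· ∈ s)]

lemma subtype_map_subtype_union {D : Finset s} {A : Finset V} (hA : ∀ x ∈ A, x ∉ s) :
    (D.map (Function.Embedding.subtype _) ∪ A).subtype (· ∈ s) = D := by
  ext x
  simpa using fun hx => absurd x.2 (hA x hx)

lemma filter_notMem_map_subtype_union {D : Finset s} {A : Finset V} (hA : ∀ x ∈ A, x ∉ s) :
    (D.map (Function.Embedding.subtype _) ∪ A).filter (· ∉ s) = A := by
  ext x
  simp only [mem_filter, mem_union, mem_map, Function.Embedding.coe_subtype]
  constructor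
  · rintro ⟨⟨y, -, rfl⟩ | hx, hxs⟩
    · exact absurd y.2 hxs
    · exact hx
  · exact fun hx => ⟨Or.inr hx, hA x hx⟩

lemma map_subtype_subtype_union_filter_notMem (S : Finset V) :
    (S.subtype (· ∈ s)).map (Function.Embedding.subtype _) ∪ S.filter (· ∉ s) = S := by
  rw [subtype_map, filter_union_filter_not_eq]

variable {ℱ : Finset (Finset V)} {𝒟 : Finset (Finset s)} {𝒜 : Finset (Finset V)}

lemma sum_eq_sum_product_of_split {M : Type*} [AddCommMonoid M] (f : Finset V → M)
    (h𝒜 : ∀ A ∈ 𝒜, ∀ x ∈ A, x ∉ s)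
    (hℱ : ∀ S, S ∈ ℱ ↔ S.subtype (· ∈ s) ∈ 𝒟 ∧ S.filter (· ∉ s) ∈ 𝒜) :
    ∑ S ∈ ℱ, f S = ∑ p ∈ 𝒟 ×ˢ 𝒜, f (p.1.map (Function.Embedding.subtype _) ∪ p.2) := by
  refine sum_nbij' (fun S => (S.subtype (· ∈ s), S.filter (· ∉ s)))
    (fun p => p.1.map (Function.Embedding.subtype _) ∪ p.2) ?_ ?_ ?_ ?_ ?_
  · intro S hS
    simpa only [mem_coe, mem_product] using (hℱ S).1 hS
  · rintro ⟨D, A⟩ hp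
    rw [mem_product] at hp
    rw [hℱ, subtype_map_subtype_union (h𝒜 A hp.2), filter_notMem_map_subtype_union (h𝒜 A hp.2)]
    exact hp
  · intro S _
    exact map_subtype_subtype_union_filter_notMem S
  · rintro ⟨D, A⟩ hp
    rw [mem_product] at hp
    simp only [subtype_map_subtype_union (h𝒜 A hp.2),
      filter_notMem_map_subtype_union (h𝒜 A hp.2)]
  · intro S _
    rw [map_subtype_subtype_union_filter_notMem]

lemma card_eq_mul_of_split (h𝒜 : ∀ A ∈ 𝒜, ∀ x ∈ A, x ∉ s)
    (hℱ : ∀ S, S ∈ ℱ ↔ S.subtype (· ∈ s) ∈ 𝒟 ∧ S.filter (· ∉ s) ∈ 𝒜) :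
    #ℱ = #𝒟 * #𝒜 := by
  rw [card_eq_sum_ones, sum_eq_sum_product_of_split _ h𝒜 hℱ, ← card_eq_sum_ones, card_product]

lemma sum_card_eq_of_split (h𝒜 : ∀ A ∈ 𝒜, ∀ x ∈ A, x ∉ s)
    (hℱ : ∀ S, S ∈ ℱ ↔ S.subtype (· ∈ s) ∈ 𝒟 ∧ S.filter (· ∉ s) ∈ 𝒜) :
    ∑ S ∈ ℱ, #S = #𝒜 * ∑ D ∈ 𝒟, #D + #𝒟 * ∑ A ∈ 𝒜, #A := by
  rw [sum_eq_sum_product_of_split _ h𝒜 hℱ, sum_product]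
  rw [sum_congr rfl fun D _ => sum_congr rfl fun A hA => card_map_subtype_union (D := D) (h𝒜 A hA)]
  simp only [sum_add_distrib, sum_const, smul_eq_mul, mul_sum]

end Split

lemma sum_card_powerset {α : Type*} (L : Finset α) :
    ∑ B ∈ L.powerset, #B = #L * 2 ^ (#L - 1) := by
  rw [sum_powerset_apply_card (fun m => m)]
  simpa [mul_comm] using Nat.sum_range_mul_choose #L

section StarTraces

variable {V : Type*} [DecidableEq V]

/-- The traces `S ∩ ({w} ∪ L)` of the dominating sets `S` on a star with centre `w` and
nonempty set of leaves `L`. -/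
def starTraces (w : V) (L : Finset V) : Finset (Finset V) :=
  (insert w L).powerset.filter fun A => w ∈ A ∨ L ⊆ A

variable {w : V} {L : Finset V}

lemma subset_of_mem_starTraces {A : Finset V} (hA : A ∈ starTraces w L) : A ⊆ insert w L :=
  mem_powerset.mp (mem_filter.mp hA).1

lemma filter_mem_starTraces_iff {p : V → Prop} [DecidablePred p] (hp : ∀ x, p x ↔ x ∈ insert w L)
    (S : Finset V) : S.filter p ∈ starTraces w L ↔ w ∈ S ∨ L ⊆ S := by
  simp only [starTraces, mem_filter, mem_powerset, subset_iff, hp]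
  grind

lemma starTraces_eq (hw : w ∉ L) :
    starTraces w L = insert L (L.powerset.image (insert w)) := by
  ext A
  simp only [starTraces, mem_filter, mem_powerset, mem_insert, mem_image]
  constructor
  · rintro ⟨hA, hwA | hLA⟩
    · exact Or.inr ⟨A.erase w, subset_insert_iff.mp hA, insert_erase hwA⟩
    · by_cases hwA : w ∈ A
      · exact Or.inr ⟨A.erase w, subset_insert_iff.mp hA, insert_erase hwA⟩
      · exact Or.inl (((subset_insert_iff_of_notMem hwA).mp hA).antisymm hLA)
  · rintro (rfl | ⟨B, hB, rfl⟩)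
    · exact ⟨subset_insert w A, Or.inr Subset.rfl⟩
    · exact ⟨insert_subset_insert w hB, Or.inl (mem_insert_self w B)⟩

lemma insert_injOn_powerset (hw : w ∉ L) : Set.InjOn (insert w) (L.powerset : Set (Finset V)) :=
  fun B hB C hC h => by
    rw [← erase_insert (notMem_mono (mem_powerset.mp hB) hw),
      ← erase_insert (notMem_mono (mem_powerset.mp hC) hw), h]

lemma notMem_image_insert_powerset (hw : w ∉ L) : L ∉ L.powerset.image (insert w) := by
  simp only [mem_image, not_exists, not_and]
  exact fun B _ h => hw (h ▸ mem_insert_self w B)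

lemma card_starTraces (hw : w ∉ L) : #(starTraces w L) = 2 ^ #L + 1 := by
  rw [starTraces_eq hw, card_insert_of_notMem (notMem_image_insert_powerset hw),
    card_image_of_injOn (insert_injOn_powerset hw), card_powerset]

lemma sum_card_starTraces (hw : w ∉ L) :
    ∑ A ∈ starTraces w L, #A = #L + 2 ^ #L + #L * 2 ^ (#L - 1) := by
  rw [starTraces_eq hw, sum_insert (notMem_image_insert_powerset hw),
    sum_image (insert_injOn_powerset hw)]
  rw [sum_congr rfl fun B hB => card_insert_of_notMem (notMem_mono (mem_powerset.mp hB) hw),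
    sum_add_distrib, sum_card_powerset, sum_const, card_powerset, smul_eq_mul, mul_one]
  ring

end StarTraces

section Domination

variable {V : Type*} [Fintype V] {G : SimpleGraph V}

lemma mem_domSets {S : Finset V} : S ∈ domSets G ↔ ∀ v ∉ S, ∃ u ∈ S, G.Adj u v := by
  simp [domSets]

lemma IsLeaf.eq_of_adj {v x y : V} (h : IsLeaf G v) (hx : G.Adj v x) (hy : G.Adj v y) : x = y := by
  obtain ⟨a, ha⟩ := card_eq_one.mp (h : #(G.neighborFinset v) = 1)
  have hx' : x ∈ G.neighborFinset v := by simpa using hx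
  have hy' : y ∈ G.neighborFinset v := by simpa using hy
  rw [ha, mem_singleton] at hx' hy'
  rw [hx', hy']

lemma IsLeaf.mem_or_mem_of_mem_domSets {S : Finset V} (hS : S ∈ domSets G) {l y : V}
    (hl : IsLeaf G l) (hly : G.Adj l y) : l ∈ S ∨ y ∈ S := by
  by_contra! h
  obtain ⟨u, huS, hul⟩ := mem_domSets.mp hS l h.1
  exact h.2 (hl.eq_of_adj hul.symm hly ▸ huS)

variable {w : V}

lemma mem_compl_leafNbrSet_union_singleton {x : V} :
    x ∈ (leafNbrSet G w ∪ {w})ᶜ ↔ x ∉ leafNbrSet G w ∧ x ≠ w := by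
  simp [and_comm]

lemma subtype_mem_domSets_induce (hL : (leafNbrSet G w).Nonempty)
    (hsupp : ∀ u ∈ G.neighborSet w \ leafNbrSet G w, IsSupport G u) {S : Finset V}
    (hS : S ∈ domSets G) :
    S.subtype (· ∈ (leafNbrSet G w ∪ {w})ᶜ) ∈ domSets (G.induce (leafNbrSet G w ∪ {w})ᶜ) := by
  rw [mem_domSets]
  rintro ⟨y, hys⟩ hyS
  rw [mem_compl_leafNbrSet_union_singleton] at hys
  replace hyS : y ∉ S := by simpa using hyS
  by_cases hwy : G.Adj w y
  · obtain ⟨l, hyl, hl⟩ := hsupp y ⟨hwy, hys.1⟩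
    have hlS : l ∈ S := (hl.mem_or_mem_of_mem_domSets hS hyl.symm).resolve_right hyS
    have hlw : l ≠ w := by
      rintro rfl
      obtain ⟨v, hv⟩ := hL
      exact hys.1 (hl.eq_of_adj hyl.symm hv.1 ▸ hv)
    have hls : l ∈ (leafNbrSet G w ∪ {w})ᶜ := mem_compl_leafNbrSet_union_singleton.mpr
      ⟨fun hlL => hys.2 (hlL.2.eq_of_adj hyl.symm hlL.1.symm), hlw⟩
    exact ⟨⟨l, hls⟩, by simpa using hlS, hyl.symm⟩
  · obtain ⟨u, huS, huy⟩ := mem_domSets.mp hS y hyS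
    have hus : u ∈ (leafNbrSet G w ∪ {w})ᶜ := mem_compl_leafNbrSet_union_singleton.mpr
      ⟨fun huL => hys.2 (huL.2.eq_of_adj huy huL.1.symm), fun huw => hwy (huw ▸ huy)⟩
    exact ⟨⟨u, hus⟩, by simpa using huS, huy⟩

lemma mem_domSets_iff_of_forall_isSupport (hL : (leafNbrSet G w).Nonempty)
    (hsupp : ∀ u ∈ G.neighborSet w \ leafNbrSet G w, IsSupport G u) (S : Finset V) :
    S ∈ domSets G ↔
      S.subtype (· ∈ (leafNbrSet G w ∪ {w})ᶜ) ∈ domSets (G.induce (leafNbrSet G w ∪ {w})ᶜ) ∧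
        (w ∈ S ∨ ∀ v ∈ leafNbrSet G w, v ∈ S) := by
  constructor
  · refine fun hS => ⟨subtype_mem_domSets_induce hL hsupp hS, or_iff_not_imp_left.mpr ?_⟩
    exact fun hwS v hv => (hv.2.mem_or_mem_of_mem_domSets hS hv.1.symm).resolve_right hwS
  · rintro ⟨hH, hK⟩
    rw [mem_domSets] at hH ⊢
    intro x hxS
    by_cases hx : x ∈ (leafNbrSet G w ∪ {w})ᶜ
    · obtain ⟨u, huS, hux⟩ := hH ⟨x, hx⟩ (by simpa using hxS)
      exact ⟨u, by simpa using huS, hux⟩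
    · rw [mem_compl_leafNbrSet_union_singleton, not_and_or, not_not, not_not] at hx
      rcases hx with hxL | rfl
      · exact ⟨w, hK.resolve_right fun h => hxS (h x hxL), hxL.1⟩
      · obtain ⟨v, hv⟩ := hL
        exact ⟨v, hK.resolve_left hxS v hv, hv.1.symm⟩

end Domination

/-- Let `w` be a support vertex of `G` with exactly `t ∈ {1,2}` leaf neighbors such that
every non-leaf neighbor of `w` is a support vertex, and let `H = G ∖ (L_G(w) ∪ {w})`.
Then `2n·|𝒟(G)| − 3·Σ_{S∈𝒟(G)}|S| = (2t+1)·[2(n−1−t)·|𝒟(H)| − 3·Σ_{S∈𝒟(H)}|S|]`. -/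
theorem support_vertex_small_t {V : Type*} [Fintype V] (G : SimpleGraph V) (w : V)
    (t : ℕ) (ht : t = 1 ∨ t = 2) (hcard : (leafNbrSet G w).ncard = t)
    (hsupp : ∀ u ∈ G.neighborSet w \ leafNbrSet G w, IsSupport G u) :
    2 * (Fintype.card V : ℤ) * ((domSets G).card : ℤ)
        - 3 * (∑ S ∈ domSets G, (S.card : ℤ)) =
      (2 * (t : ℤ) + 1) *
        (2 * ((Fintype.card V : ℤ) - 1 - t)
            * ((domSets (G.induce ((leafNbrSet G w ∪ {w})ᶜ))).card : ℤ)
          - 3 * ∑ S ∈ domSets (G.induce ((leafNbrSet G w ∪ {w})ᶜ)), (S.card : ℤ)) := by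
  set s : Set V := (leafNbrSet G w ∪ {w})ᶜ
  set L := (leafNbrSet G w).toFinset
  have hLt : #L = t := by rw [← hcard, Set.ncard_eq_toFinset_card']
  have hwL : w ∉ L := fun h => G.irrefl (Set.mem_toFinset.mp h).1
  have hL : (leafNbrSet G w).Nonempty := Set.nonempty_of_ncard_ne_zero (by omega)
  have hK : ∀ x, x ∉ s ↔ x ∈ insert w L := fun x => by
    rw [mem_compl_leafNbrSet_union_singleton, mem_insert, Set.mem_toFinset]
    tauto
  have hsplit : ∀ S, S ∈ domSets G ↔
      S.subtype (· ∈ s) ∈ domSets (G.induce s) ∧ S.filter (· ∉ s) ∈ starTraces w L := fun S => by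
    rw [filter_mem_starTraces_iff hK]
    simpa [L, subset_iff] using mem_domSets_iff_of_forall_isSupport hL hsupp S
  have htraces : ∀ A ∈ starTraces w L, ∀ x ∈ A, x ∉ s :=
    fun A hA x hx => (hK x).mpr (subset_of_mem_starTraces hA hx)
  have hcardG := card_eq_mul_of_split htraces hsplit
  have hsumG := sum_card_eq_of_split htraces hsplit
  rw [card_starTraces hwL, hLt] at hcardG
  rw [sum_card_starTraces hwL, card_starTraces hwL, hLt] at hsumG
  rw [← Nat.cast_sum, ← Nat.cast_sum, hcardG, hsumG]
  rcases ht with rfl | rfl <;> push_cast <;> ring
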